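/- arXiv:1003.1417 — 3 statements merged into one kernel-verified Lean document; each statement's English description precedes it below -/
import Mathlib

section
/- In an almost bi-paracontact manifold, the tangent bundle splits as direct sums TM = Dα⁺ ⊕ Dα⁻ ⊕ ℝξ for each α ∈ {1,2}, and also TM = D₁^± ⊕ D₂^± ⊕ ℝξ (any choice of signs); consequently dim D₁⁺ = dim D₁⁻ = dim D₂⁺ = dim D₂⁻ = n, so φ₁ and φ₂ are almost paracontact structures. -/
/-!
For `a = ±1` the `a`-eigenvectors of `φ₁`, `φ₂` are killed by `η` (since `η ∘ φ = 0`), so they lie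
in the contact distribution `D = ker η`, which is complementary to `ℝξ` because `η ξ = 1`. On `D`
each `φ` is an involution, so `D = D⁺ ⊕ D⁻` via `x = ½(x + φx) + ½(x - φx)`. Anticommutation makes
`φ₂` swap `D₁⁺` and `D₁⁻` and forces `D₁^± ∩ D₂^± = 0`, which yields `D = D₁^± ⊕ D₂^±` as well.
Counting dimensions in these splittings of the `2n`-dimensional `D` gives all four dimensions `n`.
-/

open Module

/-- The eigendistribution (pointwise: eigenspace) of a `(1,1)`-tensor `φ` for the
eigenvalue `c`. -/
noncomputable def eigenSub {V : Type*} [AddCommGroup V] [Module ℝ V]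
    (φ : V →ₗ[ℝ] V) (c : ℝ) : Submodule ℝ V :=
  LinearMap.ker (φ - c • LinearMap.id)

theorem iSupIndep_fin_three_of_isCompl {α : Type*} [CompleteLattice α] [IsModularLattice α]
    {a b c : α} (hab : Disjoint a b) (h : IsCompl (a ⊔ b) c) : iSupIndep ![a, b, c] :=
  iSupIndep_fin_three.mpr
    ⟨hab.disjoint_sup_right_of_disjoint_sup_left h.disjoint,
      sup_comm a c ▸ hab.symm.disjoint_sup_right_of_disjoint_sup_left (sup_comm a b ▸ h.disjoint),
      h.disjoint.symm⟩

theorem DirectSum.isInternal_fin_three_of_isCompl {R M : Type*} [Ring R] [AddCommGroup M]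
    [Module R M] {A B C : Submodule R M} (hAB : Disjoint A B) (h : IsCompl (A ⊔ B) C) :
    DirectSum.IsInternal ![A, B, C] :=
  DirectSum.isInternal_submodule_of_iSupIndep_of_iSup_eq_top
    (iSupIndep_fin_three_of_isCompl hAB h) (by simpa using h.sup_eq_top)

theorem LinearMap.isCompl_ker_span_singleton {K V : Type*} [DivisionRing K] [AddCommGroup V]
    [Module K V] {η : V →ₗ[K] K} {ξ : V} (hηξ : η ξ = 1) :
    IsCompl (LinearMap.ker η) (K ∙ ξ) :=
  Submodule.isCompl_span_singleton_of_isCoatom_of_notMem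
    (LinearMap.isCoatom_ker_of_surjective fun t => ⟨t • ξ, by simp [hηξ]⟩) (by simp [hηξ])

theorem Submodule.finrank_add_finrank_add_one_of_sup_eq_ker {K V : Type*} [DivisionRing K]
    [AddCommGroup V] [Module K V] [FiniteDimensional K V] {η : V →ₗ[K] K} (hη : η ≠ 0)
    {A B : Submodule K V} (hAB : Disjoint A B) (hsup : A ⊔ B = LinearMap.ker η) :
    finrank K A + finrank K B + 1 = finrank K V := by
  rw [← Submodule.finrank_sup_add_finrank_inf_eq, hAB.eq_bot, finrank_bot, add_zero, hsup,
    Module.Dual.finrank_ker_add_one_of_ne_zero hη]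

section Eigen

variable {V : Type*} [AddCommGroup V] [Module ℝ V] {η : V →ₗ[ℝ] ℝ} {ξ : V}
  {φ ψ : V →ₗ[ℝ] V} {a b : ℝ} {x : V}

theorem mem_eigenSub : x ∈ eigenSub φ a ↔ φ x = a • x := by
  simp [eigenSub, sub_eq_zero]

theorem eigenSub_le_ker (hηφ : ∀ X, η (φ X) = 0) (ha : a ≠ 0) :
    eigenSub φ a ≤ LinearMap.ker η := fun x hx => by
  have := hηφ x
  rw [mem_eigenSub.mp hx, map_smul, smul_eq_zero] at this
  exact this.resolve_left ha

theorem disjoint_eigenSub (hab : a ≠ b) : Disjoint (eigenSub φ a) (eigenSub φ b) := by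
  refine Submodule.disjoint_def.mpr fun x ha hb => ?_
  have : (a - b) • x = 0 := by rw [sub_smul, ← mem_eigenSub.mp ha, ← mem_eigenSub.mp hb, sub_self]
  exact (smul_eq_zero.mp this).resolve_left (sub_ne_zero.mpr hab)

theorem disjoint_eigenSub_of_anticomm (hanti : ∀ X, φ (ψ X) = -ψ (φ X)) (ha : a ≠ 0)
    (hb : b ≠ 0) : Disjoint (eigenSub φ a) (eigenSub ψ b) := by
  refine Submodule.disjoint_def.mpr fun x hφ hψ => ?_
  have h := hanti x
  rw [mem_eigenSub.mp hφ, mem_eigenSub.mp hψ, map_smul, map_smul, mem_eigenSub.mp hφ,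
    mem_eigenSub.mp hψ, smul_smul, smul_smul, mul_comm, eq_neg_iff_add_eq_zero, ← two_smul ℝ,
    smul_smul, smul_eq_zero] at h
  exact h.resolve_left (by positivity)

theorem map_mem_eigenSub_neg_of_anticomm (hanti : ∀ X, φ (ψ X) = -ψ (φ X))
    (hx : x ∈ eigenSub φ a) : ψ x ∈ eigenSub φ (-a) := by
  rw [mem_eigenSub, hanti, mem_eigenSub.mp hx, map_smul, neg_smul]

theorem add_smul_map_mem_eigenSub (hsq : ∀ X, φ (φ X) = X - η X • ξ) (ha : a * a = 1)
    (hx : η x = 0) : x + a • φ x ∈ eigenSub φ a := by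
  rw [mem_eigenSub, map_add, map_smul, hsq, hx, zero_smul, sub_zero, smul_add, smul_smul, ha,
    one_smul, add_comm]

theorem ker_le_eigenSub_sup_eigenSub_neg (hsq : ∀ X, φ (φ X) = X - η X • ξ) (ha : a * a = 1) :
    LinearMap.ker η ≤ eigenSub φ a ⊔ eigenSub φ (-a) := fun x hx => by
  have hx' : x = (2⁻¹ : ℝ) • (x + a • φ x) + (2⁻¹ : ℝ) • (x + (-a) • φ x) := by module
  rw [hx']
  exact Submodule.add_mem_sup
    (Submodule.smul_mem _ _ (add_smul_map_mem_eigenSub hsq ha hx))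
    (Submodule.smul_mem _ _ (add_smul_map_mem_eigenSub hsq (by rwa [neg_mul_neg]) hx))

theorem eigenSub_sup_eigenSub_neg_eq_ker (hηφ : ∀ X, η (φ X) = 0)
    (hsq : ∀ X, φ (φ X) = X - η X • ξ) (ha : a * a = 1) :
    eigenSub φ a ⊔ eigenSub φ (-a) = LinearMap.ker η :=
  have ha0 : a ≠ 0 := left_ne_zero_of_mul_eq_one ha
  le_antisymm (sup_le (eigenSub_le_ker hηφ ha0) (eigenSub_le_ker hηφ (neg_ne_zero.mpr ha0)))
    (ker_le_eigenSub_sup_eigenSub_neg hsq ha)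

theorem eigenSub_sup_eigenSub_eq_ker_of_anticomm (hηφ : ∀ X, η (φ X) = 0)
    (hηψ : ∀ X, η (ψ X) = 0) (hsqφ : ∀ X, φ (φ X) = X - η X • ξ)
    (hsqψ : ∀ X, ψ (ψ X) = X - η X • ξ) (hanti : ∀ X, φ (ψ X) = -ψ (φ X))
    (ha : a * a = 1) (hb : b * b = 1) :
    eigenSub φ a ⊔ eigenSub ψ b = LinearMap.ker η := by
  have ha0 : a ≠ 0 := left_ne_zero_of_mul_eq_one ha
  refine le_antisymm (sup_le (eigenSub_le_ker hηφ ha0)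
    (eigenSub_le_ker hηψ (left_ne_zero_of_mul_eq_one hb))) ?_
  refine (ker_le_eigenSub_sup_eigenSub_neg hsqφ ha).trans (sup_le le_sup_left fun y hy => ?_)
  -- `ψ` swaps the `±a`-eigenspaces of `φ`, so `y = (y + b ψ y) - b ψ y` splits `y` as required.
  have hψy : ψ y ∈ eigenSub φ a := neg_neg a ▸ map_mem_eigenSub_neg_of_anticomm hanti hy
  have hyb : y + b • ψ y ∈ eigenSub ψ b :=
    add_smul_map_mem_eigenSub hsqψ hb (eigenSub_le_ker hηφ (neg_ne_zero.mpr ha0) hy)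
  rw [← add_sub_cancel_right y (b • ψ y), sub_eq_neg_add, ← neg_smul]
  exact Submodule.add_mem_sup (Submodule.smul_mem _ _ hψy) hyb

end Eigen

theorem biparacontact_splitting_general
    {V : Type*} [AddCommGroup V] [Module ℝ V] [FiniteDimensional ℝ V] (n : ℕ)
    (hdim : finrank ℝ V = 2 * n + 1)
    (η : V →ₗ[ℝ] ℝ) (ξ : V) (φ₁ φ₂ : V →ₗ[ℝ] V)
    (hηξ : η ξ = 1)
    (hηφ₁ : ∀ X, η (φ₁ X) = 0) (hηφ₂ : ∀ X, η (φ₂ X) = 0)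
    (hanti : ∀ X, φ₁ (φ₂ X) = -φ₂ (φ₁ X))
    (hsq₁ : ∀ X, φ₁ (φ₁ X) = X - η X • ξ)
    (hsq₂ : ∀ X, φ₂ (φ₂ X) = X - η X • ξ) :
    DirectSum.IsInternal
      ![eigenSub φ₁ 1, eigenSub φ₁ (-1), Submodule.span ℝ {ξ}] ∧
    DirectSum.IsInternal
      ![eigenSub φ₂ 1, eigenSub φ₂ (-1), Submodule.span ℝ {ξ}] ∧
    (∀ a b : ℝ, (a = 1 ∨ a = -1) → (b = 1 ∨ b = -1) →
      DirectSum.IsInternal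
        ![eigenSub φ₁ a, eigenSub φ₂ b, Submodule.span ℝ {ξ}]) ∧
    finrank ℝ (eigenSub φ₁ 1) = n ∧ finrank ℝ (eigenSub φ₁ (-1)) = n ∧
    finrank ℝ (eigenSub φ₂ 1) = n ∧ finrank ℝ (eigenSub φ₂ (-1)) = n := by
  have hsign : ∀ a : ℝ, (a = 1 ∨ a = -1) → a * a = 1 := by
    rintro a (rfl | rfl) <;> norm_num
  have hξ := LinearMap.isCompl_ker_span_singleton hηξ
  have hη : η ≠ 0 := fun h => by simp [h] at hηξ
  have split₁ := eigenSub_sup_eigenSub_neg_eq_ker hηφ₁ hsq₁ (one_mul 1)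
  have split₂ := eigenSub_sup_eigenSub_neg_eq_ker hηφ₂ hsq₂ (one_mul 1)
  have mixed : ∀ a b : ℝ, (a = 1 ∨ a = -1) → (b = 1 ∨ b = -1) →
      eigenSub φ₁ a ⊔ eigenSub φ₂ b = LinearMap.ker η := fun a b ha hb =>
    eigenSub_sup_eigenSub_eq_ker_of_anticomm hηφ₁ hηφ₂ hsq₁ hsq₂ hanti (hsign a ha) (hsign b hb)
  have disj₁₂ : ∀ a b : ℝ, (a = 1 ∨ a = -1) → (b = 1 ∨ b = -1) →
      Disjoint (eigenSub φ₁ a) (eigenSub φ₂ b) := fun a b ha hb =>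
    disjoint_eigenSub_of_anticomm hanti (left_ne_zero_of_mul_eq_one (hsign a ha))
      (left_ne_zero_of_mul_eq_one (hsign b hb))
  have disj₁ : Disjoint (eigenSub φ₁ 1) (eigenSub φ₁ (-1)) := disjoint_eigenSub (by norm_num)
  have disj₂ : Disjoint (eigenSub φ₂ 1) (eigenSub φ₂ (-1)) := disjoint_eigenSub (by norm_num)
  have d₁ := Submodule.finrank_add_finrank_add_one_of_sup_eq_ker hη disj₁ split₁
  have d₂ := Submodule.finrank_add_finrank_add_one_of_sup_eq_ker hη disj₂ split₂
  have dmix₁ := Submodule.finrank_add_finrank_add_one_of_sup_eq_ker hη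
    (disj₁₂ 1 1 (.inl rfl) (.inl rfl)) (mixed 1 1 (.inl rfl) (.inl rfl))
  have dmix₂ := Submodule.finrank_add_finrank_add_one_of_sup_eq_ker hη
    (disj₁₂ (-1) 1 (.inr rfl) (.inl rfl)) (mixed (-1) 1 (.inr rfl) (.inl rfl))
  refine ⟨DirectSum.isInternal_fin_three_of_isCompl disj₁ (split₁ ▸ hξ),
    DirectSum.isInternal_fin_three_of_isCompl disj₂ (split₂ ▸ hξ),
    fun a b ha hb => DirectSum.isInternal_fin_three_of_isCompl (disj₁₂ a b ha hb)
      (mixed a b ha hb ▸ hξ), ?_⟩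
  omega

/-- In a `(2n+1)`-dimensional almost bi-paracontact manifold the tangent
bundle splits as `TM = Dα⁺ ⊕ Dα⁻ ⊕ ℝξ` for each `α ∈ {1,2}`, and also
`TM = D₁^± ⊕ D₂^± ⊕ ℝξ` for any choice of signs; consequently
`dim D₁⁺ = dim D₁⁻ = dim D₂⁺ = dim D₂⁻ = n`, so `φ₁` and `φ₂` are almost paracontact
structures.  (Pointwise statement on each `(2n+1)`-dimensional tangent space.) -/
theorem biparacontact_splitting
    {V : Type*} [AddCommGroup V] [Module ℝ V] [FiniteDimensional ℝ V] (n : ℕ)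
    (hdim : finrank ℝ V = 2 * n + 1)
    (η : V →ₗ[ℝ] ℝ) (ξ : V) (φ₁ φ₂ φ₃ : V →ₗ[ℝ] V)
    (hηξ : η ξ = 1)
    (hξ₁ : φ₁ ξ = 0) (hξ₂ : φ₂ ξ = 0) (hξ₃ : φ₃ ξ = 0)
    (hηφ₁ : ∀ X, η (φ₁ X) = 0) (hηφ₂ : ∀ X, η (φ₂ X) = 0)
    (hanti : ∀ X, φ₁ (φ₂ X) = -φ₂ (φ₁ X))
    (hsq₁ : ∀ X, φ₁ (φ₁ X) = X - η X • ξ)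
    (hsq₂ : ∀ X, φ₂ (φ₂ X) = X - η X • ξ)
    (hφ₃ : ∀ X, φ₃ X = φ₁ (φ₂ X))
    (hsq₃ : ∀ X, φ₃ (φ₃ X) = -X + η X • ξ) :
    DirectSum.IsInternal
      ![eigenSub φ₁ 1, eigenSub φ₁ (-1), Submodule.span ℝ {ξ}] ∧
    DirectSum.IsInternal
      ![eigenSub φ₂ 1, eigenSub φ₂ (-1), Submodule.span ℝ {ξ}] ∧
    (∀ a b : ℝ, (a = 1 ∨ a = -1) → (b = 1 ∨ b = -1) →
      DirectSum.IsInternal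
        ![eigenSub φ₁ a, eigenSub φ₂ b, Submodule.span ℝ {ξ}]) ∧
    finrank ℝ (eigenSub φ₁ 1) = n ∧ finrank ℝ (eigenSub φ₁ (-1)) = n ∧
    finrank ℝ (eigenSub φ₂ 1) = n ∧ finrank ℝ (eigenSub φ₂ (-1)) = n :=
  biparacontact_splitting_general n hdim η ξ φ₁ φ₂ hηξ hηφ₁ hηφ₂ hanti hsq₁ hsq₂
end

section
/- An almost bi-paracontact structure (φ₁, φ₂, φ₃) is Legendrian (resp. integrable) if and only if for each α ∈ {1,2}, N^{(1)}_{φα}(X, X') ∈ Γ(Dα^∓) (resp. N^{(1)}_{φα}(X, X') = 0) for all X, X' ∈ Γ(Dα^±). -/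
/-!
On the `+1`-eigendistribution `D⁺` of an almost paracontact `φ` the form `η` vanishes, so for
`X, X' ∈ D⁺` with `Z = [X, X']` one has `2dη(X, X') = -η Z` and `N⁽¹⁾(X, X') = 2(Z - φZ)`.
Applying `φ` gives `φ N⁽¹⁾(X, X') = -N⁽¹⁾(X, X') + 2 η(Z) ξ`, so `N⁽¹⁾(X, X') ∈ D⁻` exactly when
`dη(X, X') = 0`, while `N⁽¹⁾(X, X') = 0` exactly when `Z ∈ D⁺`, which already forces `η Z = 0`.
The `-1`-eigendistribution of `φ` is the `+1`-eigendistribution of `-φ`, and `N⁽¹⁾` does not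
change under `φ ↦ -φ`, so the same computation handles `D⁻`.
-/

/-- An abstract model of the calculus of vector fields on a smooth manifold:
`R` plays the role of the ring of smooth (real-valued) functions and `V` of the Lie
algebra of vector fields; `act X f` is the derivative of the function `f` along the
vector field `X`. -/
structure VFCalc (R V : Type*) [CommRing R] [Algebra ℝ R] [AddCommGroup V]
    [Module R V] [LieRing V] where
  act : V → R → R
  act_add : ∀ (X : V) (f g : R), act X (f + g) = act X f + act X g
  act_mul : ∀ (X : V) (f g : R), act X (f * g) = f * act X g + g * act X f
  act_const : ∀ (X : V) (r : ℝ), act X (algebraMap ℝ R r) = 0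
  add_act : ∀ (X Y : V) (f : R), act (X + Y) f = act X f + act Y f
  smul_act : ∀ (f : R) (X : V) (g : R), act (f • X) g = f * act X g
  leibniz : ∀ (X Y : V) (f : R), ⁅X, f • Y⁆ = f • ⁅X, Y⁆ + act X f • Y

namespace VFCalc

variable {R V : Type*} [CommRing R] [Algebra ℝ R] [AddCommGroup V] [Module R V]
  [LieRing V] (A : VFCalc R V)

/-- `twoDEta A η X Y = 2·dη(X,Y) = X(η(Y)) - Y(η(X)) - η([X,Y])`. -/
def twoDEta (η : V →ₗ[R] R) (X Y : V) : R :=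
  A.act X (η Y) - A.act Y (η X) - η ⁅X, Y⁆

/-- The Nijenhuis torsion `[φ,φ]` of a `(1,1)`-tensor field `φ`. -/
def nij (φ : V → V) (X Y : V) : V :=
  φ (φ ⁅X, Y⁆) + ⁅φ X, φ Y⁆ - φ ⁅φ X, Y⁆ - φ ⁅X, φ Y⁆

/-- The tensor `N⁽¹⁾ = [φ,φ] + 2dη ⊗ ξ` of an almost contact structure. -/
def N1c (η : V →ₗ[R] R) (ξ : V) (φ : V → V) (X Y : V) : V :=
  nij φ X Y + A.twoDEta η X Y • ξ

/-- The tensor `N⁽¹⁾ = [φ,φ] - 2dη ⊗ ξ` of an almost paracontact structure. -/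
def N1p (η : V →ₗ[R] R) (ξ : V) (φ : V → V) (X Y : V) : V :=
  nij φ X Y - A.twoDEta η X Y • ξ

/-- The tensor `N⁽²⁾(X,Y) = (L_{φX}η)(Y) - (L_{φY}η)(X)`. -/
def N2 (η : V →ₗ[R] R) (φ : V → V) (X Y : V) : R :=
  (A.act (φ X) (η Y) - η ⁅φ X, Y⁆) - (A.act (φ Y) (η X) - η ⁅φ Y, X⁆)

/-- The tensor `N⁽³⁾ = L_ξ φ`. -/
def N3 (ξ : V) (φ : V → V) (X : V) : V := ⁅ξ, φ X⁆ - φ ⁅ξ, X⁆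

end VFCalc

section

variable {R V : Type*} [CommRing R] [Algebra ℝ R] [AddCommGroup V] [Module R V]
  [LieRing V]

/-- The almost bi-paracontact structure is *Legendrian*: `dη` vanishes on each of the
eigendistributions `D₁⁺, D₁⁻, D₂⁺, D₂⁻` of `φ₁`, `φ₂`. -/
def Legendrian (A : VFCalc R V) (η : V →ₗ[R] R) (φ₁ φ₂ : V →ₗ[R] V) : Prop :=
  (∀ X Y, φ₁ X = X → φ₁ Y = Y → A.twoDEta η X Y = 0) ∧
  (∀ X Y, φ₁ X = -X → φ₁ Y = -Y → A.twoDEta η X Y = 0) ∧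
  (∀ X Y, φ₂ X = X → φ₂ Y = Y → A.twoDEta η X Y = 0) ∧
  (∀ X Y, φ₂ X = -X → φ₂ Y = -Y → A.twoDEta η X Y = 0)

/-- The almost bi-paracontact structure is *integrable*: it is Legendrian and the four
eigendistributions are involutive, i.e. they define Legendre foliations. -/
def Integrable (A : VFCalc R V) (η : V →ₗ[R] R) (φ₁ φ₂ : V →ₗ[R] V) : Prop :=
  Legendrian A η φ₁ φ₂ ∧
  (∀ X Y, φ₁ X = X → φ₁ Y = Y → φ₁ ⁅X, Y⁆ = ⁅X, Y⁆) ∧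
  (∀ X Y, φ₁ X = -X → φ₁ Y = -Y → φ₁ ⁅X, Y⁆ = -⁅X, Y⁆) ∧
  (∀ X Y, φ₂ X = X → φ₂ Y = Y → φ₂ ⁅X, Y⁆ = ⁅X, Y⁆) ∧
  (∀ X Y, φ₂ X = -X → φ₂ Y = -Y → φ₂ ⁅X, Y⁆ = -⁅X, Y⁆)

theorem isUnit_two_of_algebra_real : IsUnit (2 : R) := by
  rw [← map_ofNat (algebraMap ℝ R) 2]
  exact (IsUnit.mk0 (2 : ℝ) two_ne_zero).map _

theorem LinearMap.smul_eq_zero_iff_of_apply_eq_one {S M : Type*} [Semiring S]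
    [AddCommMonoid M] [Module S M] (f : M →ₗ[S] S) {v : M} (hv : f v = 1) (c : S) :
    c • v = 0 ↔ c = 0 := by
  refine ⟨fun h => ?_, fun h => by rw [h, zero_smul]⟩
  simpa [hv] using congrArg f h

namespace VFCalc

theorem act_zero (A : VFCalc R V) (X : V) : A.act X 0 = 0 := by
  simpa using A.act_const X 0

/- The bracket is biadditive for the additive structure of `LieRing V` (the one `lie_skew` and
Mathlib's `neg_lie` refer to), which need not be that of the module `V`; compatibility with the
module negation comes from the Leibniz rule with the constant `-1`. -/
theorem lie_neg (A : VFCalc R V) (X Y : V) : ⁅X, -Y⁆ = -⁅X, Y⁆ := by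
  have h := A.leibniz X Y (algebraMap ℝ R (-1))
  rwa [A.act_const, zero_smul, add_zero, map_neg, map_one, neg_one_smul, neg_one_smul] at h

theorem neg_lie (A : VFCalc R V) (X Y : V) : ⁅-X, Y⁆ = -⁅X, Y⁆ := by
  have lie_neg_left := @_root_.neg_lie V V _ LieRing.toAddCommGroup lieRingSelfModule
  conv_lhs => rw [← lie_skew, A.lie_neg]
  conv_rhs => rw [← lie_skew, ← lie_neg_left, ← A.lie_neg, lie_neg_left, A.lie_neg]

theorem N1p_neg (A : VFCalc R V) (η : V →ₗ[R] R) (ξ : V) (φ : V →ₗ[R] V) (X Y : V) :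
    A.N1p η ξ ⇑(-φ) X Y = A.N1p η ξ ⇑φ X Y := by
  simp only [N1p, nij, LinearMap.neg_apply, map_neg, neg_neg, A.lie_neg, A.neg_lie]

theorem twoDEta_of_eta_eq_zero (A : VFCalc R V) (η : V →ₗ[R] R) {X Y : V} (hX : η X = 0)
    (hY : η Y = 0) : A.twoDEta η X Y = -η ⁅X, Y⁆ := by
  rw [twoDEta, hX, hY, A.act_zero, A.act_zero, sub_self, zero_sub]

end VFCalc

section AlmostParacontact

variable (A : VFCalc R V) (η : V →ₗ[R] R) (ξ : V) (φ : V →ₗ[R] V)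

theorem twoDEta_of_apply_eq_self (hηφ : ∀ X, η (φ X) = 0) {X Y : V} (hX : φ X = X)
    (hY : φ Y = Y) : A.twoDEta η X Y = -η ⁅X, Y⁆ :=
  A.twoDEta_of_eta_eq_zero η (hX ▸ hηφ X) (hY ▸ hηφ Y)

theorem N1p_of_apply_eq_self (hηφ : ∀ X, η (φ X) = 0) (hsq : ∀ X, φ (φ X) = X - η X • ξ)
    {X Y : V} (hX : φ X = X) (hY : φ Y = Y) :
    A.N1p η ξ φ X Y = (2 : R) • (⁅X, Y⁆ - φ ⁅X, Y⁆) := by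
  rw [VFCalc.N1p, VFCalc.nij, twoDEta_of_apply_eq_self A η φ hηφ hX hY, hX, hY, hsq]
  module

theorem twoDEta_eq_zero_iff_of_apply_eq_self (hηξ : η ξ = 1) (hηφ : ∀ X, η (φ X) = 0)
    (hsq : ∀ X, φ (φ X) = X - η X • ξ) {X Y : V} (hX : φ X = X) (hY : φ Y = Y) :
    A.twoDEta η X Y = 0 ↔ φ (A.N1p η ξ φ X Y) = -A.N1p η ξ φ X Y := by
  set Z := ⁅X, Y⁆
  have hφN : φ (A.N1p η ξ φ X Y) = -A.N1p η ξ φ X Y + (2 * η Z) • ξ := by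
    rw [N1p_of_apply_eq_self A η ξ φ hηφ hsq hX hY, map_smul, map_sub, hsq]
    module
  rw [hφN, add_eq_left, η.smul_eq_zero_iff_of_apply_eq_one hηξ,
    isUnit_two_of_algebra_real.mul_right_eq_zero,
    twoDEta_of_apply_eq_self A η φ hηφ hX hY, neg_eq_zero]

theorem twoDEta_eq_zero_and_lie_iff_of_apply_eq_self (hηφ : ∀ X, η (φ X) = 0)
    (hsq : ∀ X, φ (φ X) = X - η X • ξ) {X Y : V} (hX : φ X = X) (hY : φ Y = Y) :
    A.twoDEta η X Y = 0 ∧ φ ⁅X, Y⁆ = ⁅X, Y⁆ ↔ A.N1p η ξ φ X Y = 0 := by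
  rw [N1p_of_apply_eq_self A η ξ φ hηφ hsq hX hY, isUnit_two_of_algebra_real.smul_eq_zero,
    sub_eq_zero, eq_comm (a := ⁅X, Y⁆)]
  refine and_iff_right_of_imp fun hZ => ?_
  rw [twoDEta_of_apply_eq_self A η φ hηφ hX hY, (hZ ▸ hηφ ⁅X, Y⁆ : η ⁅X, Y⁆ = 0), neg_zero]

theorem legendre_posEigen_iff (hηξ : η ξ = 1) (hηφ : ∀ X, η (φ X) = 0)
    (hsq : ∀ X, φ (φ X) = X - η X • ξ) :
    (∀ X Y, φ X = X → φ Y = Y → A.twoDEta η X Y = 0) ↔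
      ∀ X Y, φ X = X → φ Y = Y → φ (A.N1p η ξ φ X Y) = -A.N1p η ξ φ X Y :=
  forall₂_congr fun _ _ => forall₂_congr fun hX hY =>
    twoDEta_eq_zero_iff_of_apply_eq_self A η ξ φ hηξ hηφ hsq hX hY

theorem foliation_posEigen_iff (hηφ : ∀ X, η (φ X) = 0) (hsq : ∀ X, φ (φ X) = X - η X • ξ) :
    ((∀ X Y, φ X = X → φ Y = Y → A.twoDEta η X Y = 0) ∧
        ∀ X Y, φ X = X → φ Y = Y → φ ⁅X, Y⁆ = ⁅X, Y⁆) ↔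
      ∀ X Y, φ X = X → φ Y = Y → A.N1p η ξ φ X Y = 0 := by
  simp only [← forall_and]
  exact forall₂_congr fun _ _ => forall₂_congr fun hX hY =>
    twoDEta_eq_zero_and_lie_iff_of_apply_eq_self A η ξ φ hηφ hsq hX hY

theorem legendre_negEigen_iff (hηξ : η ξ = 1) (hηφ : ∀ X, η (φ X) = 0)
    (hsq : ∀ X, φ (φ X) = X - η X • ξ) :
    (∀ X Y, φ X = -X → φ Y = -Y → A.twoDEta η X Y = 0) ↔
      ∀ X Y, φ X = -X → φ Y = -Y → φ (A.N1p η ξ φ X Y) = A.N1p η ξ φ X Y := by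
  simpa only [LinearMap.neg_apply, neg_eq_iff_eq_neg, neg_neg, A.N1p_neg] using
    legendre_posEigen_iff A η ξ (-φ) hηξ (by simpa using hηφ) (by simpa using hsq)

theorem foliation_negEigen_iff (hηφ : ∀ X, η (φ X) = 0) (hsq : ∀ X, φ (φ X) = X - η X • ξ) :
    ((∀ X Y, φ X = -X → φ Y = -Y → A.twoDEta η X Y = 0) ∧
        ∀ X Y, φ X = -X → φ Y = -Y → φ ⁅X, Y⁆ = -⁅X, Y⁆) ↔
      ∀ X Y, φ X = -X → φ Y = -Y → A.N1p η ξ φ X Y = 0 := by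
  simpa only [LinearMap.neg_apply, neg_eq_iff_eq_neg, A.N1p_neg] using
    foliation_posEigen_iff A η ξ (-φ) (by simpa using hηφ) (by simpa using hsq)

end AlmostParacontact

theorem legendrian_integrable_iff_N1_on_eigendistributions_general
    (A : VFCalc R V) (η : V →ₗ[R] R) (ξ : V) (φ₁ φ₂ : V →ₗ[R] V)
    (hηξ : η ξ = 1)
    (hηφ₁ : ∀ X, η (φ₁ X) = 0) (hηφ₂ : ∀ X, η (φ₂ X) = 0)
    (hsq₁ : ∀ X, φ₁ (φ₁ X) = X - η X • ξ)
    (hsq₂ : ∀ X, φ₂ (φ₂ X) = X - η X • ξ) :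
    (Legendrian A η φ₁ φ₂ ↔
      ((∀ X Y, φ₁ X = X → φ₁ Y = Y →
          φ₁ (A.N1p η ξ ⇑φ₁ X Y) = -A.N1p η ξ ⇑φ₁ X Y) ∧
       (∀ X Y, φ₁ X = -X → φ₁ Y = -Y →
          φ₁ (A.N1p η ξ ⇑φ₁ X Y) = A.N1p η ξ ⇑φ₁ X Y) ∧
       (∀ X Y, φ₂ X = X → φ₂ Y = Y →
          φ₂ (A.N1p η ξ ⇑φ₂ X Y) = -A.N1p η ξ ⇑φ₂ X Y) ∧
       (∀ X Y, φ₂ X = -X → φ₂ Y = -Y →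
          φ₂ (A.N1p η ξ ⇑φ₂ X Y) = A.N1p η ξ ⇑φ₂ X Y))) ∧
    (Integrable A η φ₁ φ₂ ↔
      ((∀ X Y, φ₁ X = X → φ₁ Y = Y → A.N1p η ξ ⇑φ₁ X Y = 0) ∧
       (∀ X Y, φ₁ X = -X → φ₁ Y = -Y → A.N1p η ξ ⇑φ₁ X Y = 0) ∧
       (∀ X Y, φ₂ X = X → φ₂ Y = Y → A.N1p η ξ ⇑φ₂ X Y = 0) ∧
       (∀ X Y, φ₂ X = -X → φ₂ Y = -Y → A.N1p η ξ ⇑φ₂ X Y = 0))) := by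
  constructor
  · rw [Legendrian, legendre_posEigen_iff A η ξ φ₁ hηξ hηφ₁ hsq₁,
      legendre_negEigen_iff A η ξ φ₁ hηξ hηφ₁ hsq₁, legendre_posEigen_iff A η ξ φ₂ hηξ hηφ₂ hsq₂,
      legendre_negEigen_iff A η ξ φ₂ hηξ hηφ₂ hsq₂]
  · rw [Integrable, Legendrian, ← foliation_posEigen_iff A η ξ φ₁ hηφ₁ hsq₁,
      ← foliation_negEigen_iff A η ξ φ₁ hηφ₁ hsq₁, ← foliation_posEigen_iff A η ξ φ₂ hηφ₂ hsq₂,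
      ← foliation_negEigen_iff A η ξ φ₂ hηφ₂ hsq₂]
    tauto

/-- An almost bi-paracontact structure `(φ₁, φ₂, φ₃)` is Legendrian
(resp. integrable) if and only if for each `α ∈ {1,2}`,
`N⁽¹⁾_{φα}(X, X') ∈ Γ(Dα^∓)` (resp. `N⁽¹⁾_{φα}(X, X') = 0`) for all
`X, X' ∈ Γ(Dα^±)`. -/
theorem legendrian_integrable_iff_N1_on_eigendistributions
    (A : VFCalc R V) (η : V →ₗ[R] R) (ξ : V) (φ₁ φ₂ φ₃ : V →ₗ[R] V)
    (hconst : ∀ X r, A.act X (algebraMap ℝ R r) = 0)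
    (hηξ : η ξ = 1) (hcontact : ∀ X, A.twoDEta η ξ X = 0)
    (hξ₁ : φ₁ ξ = 0) (hξ₂ : φ₂ ξ = 0) (hξ₃ : φ₃ ξ = 0)
    (hηφ₁ : ∀ X, η (φ₁ X) = 0) (hηφ₂ : ∀ X, η (φ₂ X) = 0)
    (hanti : ∀ X, φ₁ (φ₂ X) = -φ₂ (φ₁ X))
    (hsq₁ : ∀ X, φ₁ (φ₁ X) = X - η X • ξ)
    (hsq₂ : ∀ X, φ₂ (φ₂ X) = X - η X • ξ)
    (hφ₃ : ∀ X, φ₃ X = φ₁ (φ₂ X))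
    (hsq₃ : ∀ X, φ₃ (φ₃ X) = -X + η X • ξ) :
    (Legendrian A η φ₁ φ₂ ↔
      ((∀ X Y, φ₁ X = X → φ₁ Y = Y →
          φ₁ (A.N1p η ξ ⇑φ₁ X Y) = -A.N1p η ξ ⇑φ₁ X Y) ∧
       (∀ X Y, φ₁ X = -X → φ₁ Y = -Y →
          φ₁ (A.N1p η ξ ⇑φ₁ X Y) = A.N1p η ξ ⇑φ₁ X Y) ∧
       (∀ X Y, φ₂ X = X → φ₂ Y = Y →
          φ₂ (A.N1p η ξ ⇑φ₂ X Y) = -A.N1p η ξ ⇑φ₂ X Y) ∧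
       (∀ X Y, φ₂ X = -X → φ₂ Y = -Y →
          φ₂ (A.N1p η ξ ⇑φ₂ X Y) = A.N1p η ξ ⇑φ₂ X Y))) ∧
    (Integrable A η φ₁ φ₂ ↔
      ((∀ X Y, φ₁ X = X → φ₁ Y = Y → A.N1p η ξ ⇑φ₁ X Y = 0) ∧
       (∀ X Y, φ₁ X = -X → φ₁ Y = -Y → A.N1p η ξ ⇑φ₁ X Y = 0) ∧
       (∀ X Y, φ₂ X = X → φ₂ Y = Y → A.N1p η ξ ⇑φ₂ X Y = 0) ∧
       (∀ X Y, φ₂ X = -X → φ₂ Y = -Y → A.N1p η ξ ⇑φ₂ X Y = 0))) :=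
  legendrian_integrable_iff_N1_on_eigendistributions_general A η ξ φ₁ φ₂ hηξ hηφ₁ hηφ₂ hsq₁ hsq₂

end
end

section
/- Let (M, φ, ξ, η, g) be a non-Sasakian contact metric (κ,μ)-space and define φ₁ := (1/√(1−κ)) φh, φ₂ := (1/√(1−κ)) h, φ₃ := φ. Then (φ₁, φ₂, φ₃) is an almost bi-paracontact structure: φ₁φ₂ = −φ₂φ₁ = φ₃, φ₁² = φ₂² = I − η⊗ξ. -/
/-!
Everything reduces to the identities `h² = (1 - κ)(I - η ⊗ ξ)` and `φ³ = -φ`: they give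
`φh² = (1 - κ) φ`, `hφh = -(1 - κ) φ` and `(φh)² = -φ²h² = (1 - κ)(I - η ⊗ ξ)`, and the
normalising factor `(√(1 - κ))⁻¹` appears twice in each product, cancelling `1 - κ`.
-/

section KappaMuIdentities

variable {R V : Type*} [CommRing R] [AddCommGroup V] [Module R V]
  {η : V →ₗ[R] R} {ξ : V} {φ h : V →ₗ[R] V} {κ : R}

lemma phi_phi_phi_apply (hφξ : φ ξ = 0) (hsq : ∀ X, φ (φ X) = -X + η X • ξ) (X : V) :
    φ (φ (φ X)) = -φ X := by
  rw [hsq X, map_add, map_neg, map_smul, hφξ, smul_zero, add_zero]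

lemma phi_phi_phi_phi_apply (hφξ : φ ξ = 0) (hsq : ∀ X, φ (φ X) = -X + η X • ξ) (X : V) :
    φ (φ (φ (φ X))) = X - η X • ξ := by
  rw [phi_phi_phi_apply hφξ hsq, hsq]
  abel

lemma h_h_apply (hsq : ∀ X, φ (φ X) = -X + η X • ξ)
    (hh2 : ∀ X, h (h X) = (κ - 1) • φ (φ X)) (X : V) :
    h (h X) = (1 - κ) • (X - η X • ξ) := by
  rw [hh2, hsq]
  module

lemma phi_h_h_apply (hφξ : φ ξ = 0) (hsq : ∀ X, φ (φ X) = -X + η X • ξ)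
    (hh2 : ∀ X, h (h X) = (κ - 1) • φ (φ X)) (X : V) :
    φ (h (h X)) = (1 - κ) • φ X := by
  rw [hh2, map_smul, phi_phi_phi_apply hφξ hsq]
  module

lemma h_phi_h_apply (hφξ : φ ξ = 0) (hsq : ∀ X, φ (φ X) = -X + η X • ξ)
    (hanti : ∀ X, h (φ X) = -φ (h X)) (hh2 : ∀ X, h (h X) = (κ - 1) • φ (φ X)) (X : V) :
    h (φ (h X)) = (1 - κ) • -φ X := by
  rw [hanti, phi_h_h_apply hφξ hsq hh2, smul_neg]

lemma phi_h_phi_h_apply (hφξ : φ ξ = 0) (hsq : ∀ X, φ (φ X) = -X + η X • ξ)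
    (hanti : ∀ X, h (φ X) = -φ (h X)) (hh2 : ∀ X, h (h X) = (κ - 1) • φ (φ X)) (X : V) :
    φ (h (φ (h X))) = (1 - κ) • (X - η X • ξ) := by
  rw [hanti, hh2, map_neg, map_smul, map_smul, phi_phi_phi_phi_apply hφξ hsq]
  module

end KappaMuIdentities

lemma inv_sqrt_smul_apply_inv_sqrt_smul {V : Type*} [AddCommGroup V] [Module ℝ V]
    {a : ℝ} (ha : 0 < a) (A : V →ₗ[ℝ] V) {Y Z : V} (hA : A Y = a • Z) :
    (√a)⁻¹ • A ((√a)⁻¹ • Y) = Z := by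
  rw [map_smul, smul_smul, hA, smul_smul, ← mul_inv, Real.mul_self_sqrt ha.le,
    inv_mul_cancel₀ ha.ne', one_smul]

theorem standard_almost_biparacontact_structure_general
    {V : Type*} [AddCommGroup V] [Module ℝ V]
    (η : V →ₗ[ℝ] ℝ) (ξ : V) (φ h : V →ₗ[ℝ] V) (κ : ℝ)
    (hκ : κ < 1)
    (hφξ : φ ξ = 0)
    (hsq : ∀ X, φ (φ X) = -X + η X • ξ)
    (hanti : ∀ X, h (φ X) = -φ (h X))
    (hh2 : ∀ X, h (h X) = (κ - 1) • φ (φ X)) :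
    let φ₁ : V → V := fun X => (Real.sqrt (1 - κ))⁻¹ • φ (h X)
    let φ₂ : V → V := fun X => (Real.sqrt (1 - κ))⁻¹ • h X
    (∀ X, φ₁ (φ₂ X) = φ X) ∧
    (∀ X, φ₂ (φ₁ X) = -φ X) ∧
    (∀ X, φ₁ (φ₁ X) = X - η X • ξ) ∧
    (∀ X, φ₂ (φ₂ X) = X - η X • ξ) := by
  intro φ₁ φ₂
  have hpos : 0 < 1 - κ := sub_pos.2 hκ
  refine ⟨fun X => ?_, fun X => ?_, fun X => ?_, fun X => ?_⟩
  · exact inv_sqrt_smul_apply_inv_sqrt_smul hpos (φ ∘ₗ h) (phi_h_h_apply hφξ hsq hh2 X)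
  · exact inv_sqrt_smul_apply_inv_sqrt_smul hpos h (h_phi_h_apply hφξ hsq hanti hh2 X)
  · exact inv_sqrt_smul_apply_inv_sqrt_smul hpos (φ ∘ₗ h)
      (phi_h_phi_h_apply hφξ hsq hanti hh2 X)
  · exact inv_sqrt_smul_apply_inv_sqrt_smul hpos h (h_h_apply hsq hh2 X)

/-- Let `(M, φ, ξ, η, g)` be a non-Sasakian contact metric
`(κ,μ)`-space and define `φ₁ := (1/√(1-κ)) φh`, `φ₂ := (1/√(1-κ)) h`, `φ₃ := φ`.
Then `(φ₁, φ₂, φ₃)` is an almost bi-paracontact structure: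
`φ₁φ₂ = -φ₂φ₁ = φ₃` and `φ₁² = φ₂² = I - η⊗ξ`.
(Pointwise algebraic statement, using the identities `h² = (κ-1)φ²`, `hφ = -φh`,
`hξ = 0`, `φξ = 0`, `φ² = -I + η⊗ξ`, `η∘φ = η∘h = 0`, which hold in any non-Sasakian
contact metric `(κ,μ)`-space.) -/
theorem standard_almost_biparacontact_structure
    {V : Type*} [AddCommGroup V] [Module ℝ V]
    (η : V →ₗ[ℝ] ℝ) (ξ : V) (φ h : V →ₗ[ℝ] V) (κ : ℝ)
    (hκ : κ < 1)
    (hηξ : η ξ = 1) (hφξ : φ ξ = 0) (hhξ : h ξ = 0)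
    (hηφ : ∀ X, η (φ X) = 0) (hηh : ∀ X, η (h X) = 0)
    (hsq : ∀ X, φ (φ X) = -X + η X • ξ)
    (hanti : ∀ X, h (φ X) = -φ (h X))
    (hh2 : ∀ X, h (h X) = (κ - 1) • φ (φ X)) :
    let φ₁ : V → V := fun X => (Real.sqrt (1 - κ))⁻¹ • φ (h X)
    let φ₂ : V → V := fun X => (Real.sqrt (1 - κ))⁻¹ • h X
    (∀ X, φ₁ (φ₂ X) = φ X) ∧
    (∀ X, φ₂ (φ₁ X) = -φ X) ∧
    (∀ X, φ₁ (φ₁ X) = X - η X • ξ) ∧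
    (∀ X, φ₂ (φ₂ X) = X - η X • ξ) :=
  standard_almost_biparacontact_structure_general η ξ φ h κ hκ hφξ hsq hanti hh2
end
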